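/- Let j : A → E be a functor and T a j-relative monad. The functors f_T : A → Alg(T), sending x to the free algebra (tx, †) and f : x → y to tf, and u_T : Alg(T) → E form a j-relative adjunction: there is a bijection Alg(T)(f_T x, (e,⋊)) ≅ E(jx, e) natural in x and (e,⋊). -/

import Mathlib

open CategoryTheory

universe v₁ v₂ u₁ u₂

/-- A `j`-relative monad. -/
structure RelativeMonad {A : Type u₁} {E : Type u₂} [Category.{v₁} A] [Category.{v₂} E]
    (j : A ⥤ E) where
  t : A → E
  η : ∀ x : A, j.obj x ⟶ t x
  ext : ∀ {x y : A}, (j.obj x ⟶ t y) → (t x ⟶ t y)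
  unit_ext : ∀ {x y : A} (f : j.obj x ⟶ t y), η x ≫ ext f = f
  ext_unit : ∀ x : A, ext (η x) = 𝟙 (t x)
  ext_comp : ∀ {x y z : A} (f : j.obj x ⟶ t y) (g : j.obj y ⟶ t z),
    ext (f ≫ ext g) = ext f ≫ ext g

/-- An algebra for a `j`-relative monad `T`: an object `e` of `E` with an extension
operation sending `f : j x ⟶ e` to `f^⋊ : t x ⟶ e`, satisfying the algebra laws. -/
structure RAlgebra {A : Type u₁} {E : Type u₂} [Category.{v₁} A] [Category.{v₂} E]
    {j : A ⥤ E} (T : RelativeMonad j) where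
  e : E
  extA : ∀ {x : A}, (j.obj x ⟶ e) → (T.t x ⟶ e)
  unit_extA : ∀ {x : A} (f : j.obj x ⟶ e), T.η x ≫ extA f = f
  extA_comp : ∀ {x y : A} (f : j.obj x ⟶ T.t y) (g : j.obj y ⟶ e),
    extA (f ≫ extA g) = T.ext f ≫ extA g

/-- A morphism of `T`-algebras: a morphism `ε : e ⟶ e'` of `E` such that
`f^⋊ ≫ ε = (f ≫ ε)^⋊'` for every `f : j x ⟶ e`. -/
@[ext]
structure RAlgebraHom {A : Type u₁} {E : Type u₂} [Category.{v₁} A] [Category.{v₂} E]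
    {j : A ⥤ E} {T : RelativeMonad j} (X Y : RAlgebra T) where
  hom : X.e ⟶ Y.e
  compat : ∀ {x : A} (f : j.obj x ⟶ X.e), X.extA f ≫ hom = Y.extA (f ≫ hom)

variable {A : Type u₁} {E : Type u₂} [Category.{v₁} A] [Category.{v₂} E] {j : A ⥤ E}

/-- `T`-algebras and their morphisms form a category. -/
instance {T : RelativeMonad j} : Category (RAlgebra T) where
  Hom X Y := RAlgebraHom X Y
  id X := ⟨𝟙 X.e, by intro x f; simp⟩
  comp f g := ⟨f.hom ≫ g.hom, by
    intro x h
    rw [← Category.assoc, f.compat, g.compat, Category.assoc]⟩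
  id_comp f := RAlgebraHom.ext (Category.id_comp f.hom)
  comp_id f := RAlgebraHom.ext (Category.comp_id f.hom)
  assoc f g h := RAlgebraHom.ext (Category.assoc f.hom g.hom h.hom)

/-- The forgetful functor `u_T : Alg(T) ⥤ E`, sending an algebra `(e, ⋊)` to `e` and an
algebra morphism to its underlying morphism. -/
def uT (T : RelativeMonad j) : RAlgebra T ⥤ E where
  obj X := X.e
  map f := f.hom
  map_id _ := rfl
  map_comp _ _ := rfl

/-- The free algebra functor `f_T : A ⥤ Alg(T)`, sending `x` to the free algebra `(t x, †)`
and `f : x ⟶ y` to `t f = (j f ≫ η_y)†`. -/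
def fT (T : RelativeMonad j) : A ⥤ RAlgebra T where
  obj x := ⟨T.t x, fun f => T.ext f, fun f => T.unit_ext f, fun f g => T.ext_comp f g⟩
  map {x y} f := ⟨T.ext (j.map f ≫ T.η y), fun g => (T.ext_comp g _).symm⟩
  map_id x := RAlgebraHom.ext (by
    show T.ext (j.map (𝟙 x) ≫ T.η x) = 𝟙 (T.t x)
    rw [j.map_id, Category.id_comp, T.ext_unit])
  map_comp {x y z} f g := RAlgebraHom.ext (by
    show T.ext (j.map (f ≫ g) ≫ T.η z) =
      T.ext (j.map f ≫ T.η y) ≫ T.ext (j.map g ≫ T.η z)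
    rw [← T.ext_comp, Category.assoc, T.unit_ext, ← Category.assoc, ← j.map_comp])

/-- The free–forgetful `j`-relative adjunction for a `j`-relative monad `T`: a bijection
`Alg(T)(f_T x, (e, ⋊)) ≅ E(j x, e)` natural in `x` and in the algebra `(e, ⋊)`. -/
theorem free_forgetful_relative_adjunction (T : RelativeMonad j) :
    ∃ e : ∀ (x : A) (X : RAlgebra T), ((fT T).obj x ⟶ X) ≃ (j.obj x ⟶ (uT T).obj X),
      (∀ (x x' : A) (X : RAlgebra T) (f : x' ⟶ x) (g : (fT T).obj x ⟶ X),
        e x' X ((fT T).map f ≫ g) = j.map f ≫ e x X g) ∧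
      (∀ (x : A) (X X' : RAlgebra T) (g : (fT T).obj x ⟶ X) (h : X ⟶ X'),
        e x X' (g ≫ h) = e x X g ≫ (uT T).map h) := by
  refine ⟨fun x X => {
    toFun := fun g => T.η x ≫ g.hom
    invFun := fun f => ⟨X.extA f, fun g => (X.extA_comp g f).symm⟩
    left_inv := fun g => RAlgebraHom.ext (by
      show X.extA (T.η x ≫ g.hom) = g.hom
      have := (g.compat (T.η x)).symm
      erw [show ((fT T).obj x).extA (T.η x) = T.ext (T.η x) from rfl, T.ext_unit,
        Category.id_comp] at this
      exact this)
    right_inv := fun f => X.unit_extA f }, ?_, ?_⟩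
  · intro x x' X f g
    show T.η x' ≫ (T.ext (j.map f ≫ T.η x) ≫ g.hom) = j.map f ≫ (T.η x ≫ g.hom)
    erw [← Category.assoc, T.unit_ext, Category.assoc]
  · intro x X X' g h
    show T.η x ≫ (g.hom ≫ h.hom) = (T.η x ≫ g.hom) ≫ h.hom
    erw [Category.assoc]
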